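/- arXiv:1810.05542 — 4 statements merged into one kernel-verified Lean document; each statement's English description precedes it below -/
import Mathlib

section
/- Let Σ₁ and Σ₂ be systems in driving variable form with the same external space W and consistent subspaces V₁*, V₂*. A linear subspace S ⊆ X₁ × X₂ satisfying π_{X₁}(S) ⊆ V₁* and π_{X₂}(S) ⊆ V₂* is a trajectory simulation relation of Σ₁ by Σ₂ if and only if for all (x₁, x₂) ∈ S the following hold: (i) for every d₁ ∈ D₁ with A₁x₁ + G₁d₁ ∈ V₁* there exists d₂ ∈ D₂ with A₂x₂ + G₂d₂ ∈ V₂* and (A₁x₁ + G₁d₁, A₂x₂ + G₂d₂) ∈ S; (ii) C₁x₁ = C₂x₂. -/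
/-- A linear system in driving variable form `ẋ = A x + G d`, `w = C x`, `0 = H x`. -/
structure DVSystem (X W D Y : Type)
    [AddCommGroup X] [Module ℝ X] [AddCommGroup W] [Module ℝ W]
    [AddCommGroup D] [Module ℝ D] [AddCommGroup Y] [Module ℝ Y] where
  A : X →ₗ[ℝ] X
  G : D →ₗ[ℝ] X
  C : X →ₗ[ℝ] W
  H : X →ₗ[ℝ] Y

namespace DVSystem

section basic

variable {X W D Y : Type}
  [AddCommGroup X] [Module ℝ X] [AddCommGroup W] [Module ℝ W]
  [AddCommGroup D] [Module ℝ D] [AddCommGroup Y] [Module ℝ Y]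

/-- A subspace `U` is consistent-admissible if `A U ⊆ U + im G` and `U ⊆ ker H`. -/
def Admissible (P : DVSystem X W D Y) (U : Submodule ℝ X) : Prop :=
  U.map P.A ≤ U ⊔ LinearMap.range P.G ∧ U ≤ LinearMap.ker P.H

/-- The consistent subspace `V*`: the largest consistent-admissible subspace. -/
def V (P : DVSystem X W D Y) : Submodule ℝ X :=
  sSup {U | P.Admissible U}

end basic

section sim

variable {W : Type} [AddCommGroup W] [Module ℝ W]
variable {X₁ D₁ Y₁ : Type} [AddCommGroup X₁] [Module ℝ X₁]
  [AddCommGroup D₁] [Module ℝ D₁] [AddCommGroup Y₁] [Module ℝ Y₁]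
variable {X₂ D₂ Y₂ : Type} [AddCommGroup X₂] [Module ℝ X₂]
  [AddCommGroup D₂] [Module ℝ D₂] [AddCommGroup Y₂] [Module ℝ Y₂]

/-- Items (i)-(ii) of the (algebraic) definition of a simulation relation. -/
def SimConds (P₁ : DVSystem X₁ W D₁ Y₁) (P₂ : DVSystem X₂ W D₂ Y₂)
    (S : Submodule ℝ (X₁ × X₂)) : Prop :=
  ∀ x₁ x₂, (x₁, x₂) ∈ S →
    (∀ d₁ : D₁, P₁.A x₁ + P₁.G d₁ ∈ P₁.V →
      ∃ d₂ : D₂, P₂.A x₂ + P₂.G d₂ ∈ P₂.V ∧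
        (P₁.A x₁ + P₁.G d₁, P₂.A x₂ + P₂.G d₂) ∈ S) ∧
    P₁.C x₁ = P₂.C x₂

/-- `S` is a simulation relation of `P₁` by `P₂`. -/
def IsSimRel (P₁ : DVSystem X₁ W D₁ Y₁) (P₂ : DVSystem X₂ W D₂ Y₂)
    (S : Submodule ℝ (X₁ × X₂)) : Prop :=
  S.map (LinearMap.fst ℝ X₁ X₂) ≤ P₁.V ∧ S.map (LinearMap.snd ℝ X₁ X₂) ≤ P₂.V ∧
    SimConds P₁ P₂ S

/-- `S` is a full simulation relation of `P₁` by `P₂`: in addition `π₁(S) = V₁*`. -/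
def IsFullSimRel (P₁ : DVSystem X₁ W D₁ Y₁) (P₂ : DVSystem X₂ W D₂ Y₂)
    (S : Submodule ℝ (X₁ × X₂)) : Prop :=
  IsSimRel P₁ P₂ S ∧ S.map (LinearMap.fst ℝ X₁ X₂) = P₁.V

/-- `P₁ ≼ P₂`: `P₁` is simulated by `P₂`. -/
def Simulates (P₁ : DVSystem X₁ W D₁ Y₁) (P₂ : DVSystem X₂ W D₂ Y₂) : Prop :=
  ∃ S : Submodule ℝ (X₁ × X₂), IsFullSimRel P₁ P₂ S

/-- The composition `P₁ ∘ P₂` obtained by sharing the external variable `w₁ = w₂`. -/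
noncomputable def comp (P₁ : DVSystem X₁ W D₁ Y₁) (P₂ : DVSystem X₂ W D₂ Y₂) :
    DVSystem (X₁ × X₂) W (D₁ × D₂) (Y₁ × Y₂ × W) where
  A := P₁.A.prodMap P₂.A
  G := P₁.G.prodMap P₂.G
  C := (1/2 : ℝ) • (P₁.C ∘ₗ LinearMap.fst ℝ X₁ X₂ + P₂.C ∘ₗ LinearMap.snd ℝ X₁ X₂)
  H := (P₁.H ∘ₗ LinearMap.fst ℝ X₁ X₂).prod
    ((P₂.H ∘ₗ LinearMap.snd ℝ X₁ X₂).prod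
      (P₁.C ∘ₗ LinearMap.fst ℝ X₁ X₂ - P₂.C ∘ₗ LinearMap.snd ℝ X₁ X₂))

end sim

section relcomp

variable {X₁ X₂ X₃ : Type} [AddCommGroup X₁] [Module ℝ X₁]
  [AddCommGroup X₂] [Module ℝ X₂] [AddCommGroup X₃] [Module ℝ X₃]

/-- Composition of linear relations:
`{(x₁, x₃) | ∃ x₂, (x₁, x₂) ∈ S₁₂ ∧ (x₂, x₃) ∈ S₂₃}`. -/
def relComp (S₁₂ : Submodule ℝ (X₁ × X₂)) (S₂₃ : Submodule ℝ (X₂ × X₃)) :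
    Submodule ℝ (X₁ × X₃) where
  carrier := {p | ∃ x₂, (p.1, x₂) ∈ S₁₂ ∧ (x₂, p.2) ∈ S₂₃}
  zero_mem' := ⟨0, S₁₂.zero_mem, S₂₃.zero_mem⟩
  add_mem' := by
    rintro a b ⟨y, hy1, hy2⟩ ⟨z, hz1, hz2⟩
    exact ⟨y + z, S₁₂.add_mem hy1 hz1, S₂₃.add_mem hy2 hz2⟩
  smul_mem' := by
    rintro c a ⟨y, h1, h2⟩
    exact ⟨c • y, S₁₂.smul_mem c h1, S₂₃.smul_mem c h2⟩

/-- The pairing `{(x, (x₁, x₂)) | (x, x₁) ∈ S₁ ∧ (x, x₂) ∈ S₂}` of two relations. -/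
def pairRel (S₁ : Submodule ℝ (X₁ × X₂)) (S₂ : Submodule ℝ (X₁ × X₃)) :
    Submodule ℝ (X₁ × X₂ × X₃) where
  carrier := {p | (p.1, p.2.1) ∈ S₁ ∧ (p.1, p.2.2) ∈ S₂}
  zero_mem' := ⟨S₁.zero_mem, S₂.zero_mem⟩
  add_mem' := by
    rintro a b ⟨ha1, ha2⟩ ⟨hb1, hb2⟩
    exact ⟨S₁.add_mem ha1 hb1, S₂.add_mem ha2 hb2⟩
  smul_mem' := by
    rintro c a ⟨h1, h2⟩
    exact ⟨S₁.smul_mem c h1, S₂.smul_mem c h2⟩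

end relcomp

section contract

variable {W : Type} [AddCommGroup W] [Module ℝ W]
variable {X D Y Xa Da Ya Xg Dg Yg : Type}
  [AddCommGroup X] [Module ℝ X] [AddCommGroup D] [Module ℝ D]
  [AddCommGroup Y] [Module ℝ Y]
  [AddCommGroup Xa] [Module ℝ Xa] [AddCommGroup Da] [Module ℝ Da]
  [AddCommGroup Ya] [Module ℝ Ya]
  [AddCommGroup Xg] [Module ℝ Xg] [AddCommGroup Dg] [Module ℝ Dg]
  [AddCommGroup Yg] [Module ℝ Yg]

/-- `Sys` implements the contract `(Ass, Gar)` if `E ∘ Sys ≼ Gar` for every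
compatible environment `E`, i.e., every environment with `E ≼ Ass`. -/
def Implements (Sys : DVSystem X W D Y)
    (Ass : DVSystem Xa W Da Ya) (Gar : DVSystem Xg W Dg Yg) : Prop :=
  ∀ (Xe De Ye : Type) [AddCommGroup Xe] [Module ℝ Xe] [FiniteDimensional ℝ Xe]
    [AddCommGroup De] [Module ℝ De] [FiniteDimensional ℝ De]
    [AddCommGroup Ye] [Module ℝ Ye] [FiniteDimensional ℝ Ye]
    (E : DVSystem Xe W De Ye),
    Simulates E Ass → Simulates (comp E Sys) Gar

end contract

section refine

variable {W : Type} [AddCommGroup W] [Module ℝ W]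
variable {Xa Da Ya Xg Dg Yg Xa' Da' Ya' Xg' Dg' Yg' : Type}
  [AddCommGroup Xa] [Module ℝ Xa] [AddCommGroup Da] [Module ℝ Da]
  [AddCommGroup Ya] [Module ℝ Ya]
  [AddCommGroup Xg] [Module ℝ Xg] [AddCommGroup Dg] [Module ℝ Dg]
  [AddCommGroup Yg] [Module ℝ Yg]
  [AddCommGroup Xa'] [Module ℝ Xa'] [AddCommGroup Da'] [Module ℝ Da']
  [AddCommGroup Ya'] [Module ℝ Ya']
  [AddCommGroup Xg'] [Module ℝ Xg'] [AddCommGroup Dg'] [Module ℝ Dg']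
  [AddCommGroup Yg'] [Module ℝ Yg']

/-- The contract `(Ass', Gar')` refines the contract `(Ass, Gar)`:
`Ass ≼ Ass'` and `Ass ∘ Gar' ≼ Gar`. -/
def Refines (Ass' : DVSystem Xa' W Da' Ya') (Gar' : DVSystem Xg' W Dg' Yg')
    (Ass : DVSystem Xa W Da Ya) (Gar : DVSystem Xg W Dg Yg) : Prop :=
  Simulates Ass Ass' ∧ Simulates (comp Ass Gar') Gar

end refine

end DVSystem

open DVSystem

/-!
The key tool is a friend `F` of a consistent subspace: a linear feedback with
`(A + G F) V* ⊆ V*`. For `⇒`, an admissible velocity `A₁ x₁ + G₁ d₁ ∈ V₁*` is the initial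
velocity of the trajectory of `ẋ = (A₁ + G₁ F₁) x + G₁ (d₁ - F₁ x₁)`, which stays in `V₁*`;
a `Σ₂`-trajectory simulating it keeps the pair in the closed subspace `S`, so the initial
velocity of the pair lies in `S`. For `⇐`, condition (i) can be met by a linear feedback
`d₂ = K (x₁, x₂, d₁)`. Writing `d₁ = F₁ x₁ + e`, the closed loop of both systems driven by
`F₁ x₁ + e` and `K` is a linear ODE leaving `S` invariant; its solution from `(x₁ 0, x₂ 0)`
has first component `x₁` by uniqueness, and its second component is the required trajectory.
-/

open Set

theorem Submodule.exists_linear_selection {K E F : Type*} [Field K] [AddCommGroup E]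
    [Module K E] [AddCommGroup F] [Module K F] (L : Submodule K (E × F)) :
    ∃ f : E →ₗ[K] F, ∀ x ∈ L.map (LinearMap.fst K E F), (x, f x) ∈ L := by
  obtain ⟨g, hg⟩ := ((LinearMap.fst K E F).submoduleMap L).exists_rightInverse_of_surjective
    (LinearMap.range_eq_top.2 (LinearMap.submoduleMap_surjective _ _))
  obtain ⟨f, hf⟩ := (LinearMap.snd K E F ∘ₗ L.subtype ∘ₗ g).exists_extend
  refine ⟨f, fun x hx => ?_⟩
  have hfst : (g ⟨x, hx⟩ : E × F).1 = x :=
    congr_arg Subtype.val (LinearMap.congr_fun hg ⟨x, hx⟩)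
  have hsnd : (g ⟨x, hx⟩ : E × F).2 = f x := (LinearMap.congr_fun hf ⟨x, hx⟩).symm
  have hpair : (x, f x) = (g ⟨x, hx⟩ : E × F) := Prod.ext hfst.symm hsnd.symm
  exact hpair ▸ (g ⟨x, hx⟩).2

theorem Submodule.mem_of_hasDerivWithinAt_Ici {E : Type*} [NormedAddCommGroup E]
    [NormedSpace ℝ E] {U : Submodule ℝ E} (hU : IsClosed (U : Set E)) {f : ℝ → E} {f' : E}
    {t : ℝ} (hf : ∀ s ∈ Ici t, f s ∈ U) (hd : HasDerivWithinAt f f' (Ici t) t) : f' ∈ U := by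
  have hslope := (hasDerivWithinAt_iff_tendsto_slope' (by simp)).1 hd.Ioi_of_Ici
  refine hU.mem_of_tendsto hslope ?_
  filter_upwards [self_mem_nhdsWithin] with s hs
  rw [slope_def_module]
  exact U.smul_mem _ (U.sub_mem (hf s (Ioi_subset_Ici_self hs)) (hf t self_mem_Ici))

theorem eqOn_Ici_of_linear_ode {E : Type*} [NormedAddCommGroup E] [NormedSpace ℝ E]
    (M : E →L[ℝ] E) {g f₁ f₂ : ℝ → E}
    (h₁ : ∀ t ∈ Ici (0 : ℝ), HasDerivWithinAt f₁ (M (f₁ t) + g t) (Ici 0) t)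
    (h₂ : ∀ t ∈ Ici (0 : ℝ), HasDerivWithinAt f₂ (M (f₂ t) + g t) (Ici 0) t)
    (h0 : f₁ 0 = f₂ 0) : EqOn f₁ f₂ (Ici 0) := by
  intro b hb
  have hlip (t : ℝ) : LipschitzWith ‖M‖₊ fun x => M x + g t := fun x y => by
    simpa [edist_add_right] using M.lipschitz x y
  exact ODE_solution_unique (v := fun t x => M x + g t) hlip
    (fun s hs => (h₁ s hs.1).continuousWithinAt.mono fun z hz => hz.1)
    (fun s hs => (h₁ s hs.1).mono fun z hz => le_trans hs.1 hz)
    (fun s hs => (h₂ s hs.1).continuousWithinAt.mono fun z hz => hz.1)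
    (fun s hs => (h₂ s hs.1).mono fun z hz => le_trans hs.1 hz)
    h0 ⟨hb, le_rfl⟩

theorem exists_hasDerivAt_linear_ode {E : Type*} [NormedAddCommGroup E] [NormedSpace ℝ E]
    [CompleteSpace E] (M : E →L[ℝ] E) {g : ℝ → E} (hg : Continuous g) (y₀ : E) :
    ∃ y : ℝ → E, y 0 = y₀ ∧ ∀ t, HasDerivAt y (M (y t) + g t) t := by
  -- variation of constants: `y t = exp (t M) (y₀ + ∫₀ᵗ exp (-s M) (g s) ds)`
  let _ : NormedAlgebra ℚ (E →L[ℝ] E) := .restrictScalars ℚ ℝ _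
  set Φ : ℝ → E →L[ℝ] E := fun t => NormedSpace.exp (t • M)
  have hΦ_mul (s t : ℝ) : Φ s * Φ t = Φ (s + t) := by
    simp only [Φ, add_smul]
    exact (NormedSpace.exp_add_of_commute (((Commute.refl M).smul_left s).smul_right t)).symm
  have hΦ_comm (t : ℝ) : Φ t * M = M * Φ t := (((Commute.refl M).smul_left t).exp_left).eq
  have hh : Continuous fun s => Φ (-s) (g s) :=
    (NormedSpace.exp_continuous.comp (continuous_neg.smul continuous_const)).clm_apply hg
  set u : ℝ → E := fun t => y₀ + ∫ s in (0 : ℝ)..t, Φ (-s) (g s)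
  refine ⟨fun t => Φ t (u t), by simp [Φ, u], fun t => ?_⟩
  have hd := (hasDerivAt_exp_smul_const M t).clm_apply
    ((hh.integral_hasStrictDerivAt 0 t).hasDerivAt.const_add y₀)
  convert hd using 1
  change M (Φ t (u t)) + g t = (Φ t * M) (u t) + Φ t (Φ (-t) (g t))
  rw [hΦ_comm, mul_apply_eq_comp, ← mul_apply_eq_comp (Φ t), hΦ_mul, add_neg_cancel]
  simp [Φ]

theorem Submodule.exists_linear_ode_solution_mem {E : Type*} [NormedAddCommGroup E]
    [NormedSpace ℝ E] [FiniteDimensional ℝ E] (U : Submodule ℝ E) {M : E →ₗ[ℝ] E}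
    (hM : ∀ x ∈ U, M x ∈ U) {g : ℝ → E} (hg : ContinuousOn g (Ici 0))
    (hgU : ∀ t ∈ Ici (0 : ℝ), g t ∈ U) {y₀ : E} (hy₀ : y₀ ∈ U) :
    ∃ y : ℝ → E, y 0 = y₀ ∧
      (∀ t ∈ Ici (0 : ℝ), HasDerivWithinAt y (M (y t) + g t) (Ici 0) t) ∧ ∀ t, y t ∈ U := by
  have hmax (t : ℝ) : max t 0 ∈ Ici 0 := le_max_right t 0
  have hg' : Continuous fun t => g (max t 0) :=
    hg.comp_continuous (by fun_prop) hmax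
  obtain ⟨u, hu₀, hu⟩ := exists_hasDerivAt_linear_ode (M.restrict hM).toContinuousLinearMap
    (g := fun t => ⟨g (max t 0), hgU _ (hmax t)⟩) (hg'.subtype_mk _) ⟨y₀, hy₀⟩
  refine ⟨fun t => u t, by simp [hu₀], fun t ht => ?_, fun t => (u t).2⟩
  have hd := (U.subtypeL.hasFDerivAt (x := u t)).comp_hasDerivAt t (hu t)
  simp only [Submodule.subtypeL_apply, Submodule.coe_add, LinearMap.coe_toContinuousLinearMap',
    LinearMap.coe_restrict_apply, max_eq_left (mem_Ici.1 ht)] at hd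
  exact hd.hasDerivWithinAt

namespace DVSystem

section consistent

variable {X W D Y : Type} [AddCommGroup X] [Module ℝ X] [AddCommGroup W] [Module ℝ W]
  [AddCommGroup D] [Module ℝ D] [AddCommGroup Y] [Module ℝ Y] (P : DVSystem X W D Y)

theorem admissible_V : P.Admissible P.V := by
  rw [V, sSup_eq_iSup']
  refine ⟨?_, iSup_le fun U => U.2.2⟩
  rw [Submodule.map_iSup]
  exact iSup_le fun U => U.2.1.trans (sup_le_sup_right (le_iSup_of_le U le_rfl) _)

theorem exists_add_G_mem_V {x : X} (hx : x ∈ P.V) : ∃ d, P.A x + P.G d ∈ P.V := by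
  obtain ⟨v, hv, _, ⟨d, rfl⟩, hsum⟩ :=
    Submodule.mem_sup.1 (P.admissible_V.1 (Submodule.mem_map_of_mem hx))
  exact ⟨-d, by rwa [map_neg, ← hsum, add_neg_cancel_right]⟩

theorem exists_friend : ∃ F : X →ₗ[ℝ] D, ∀ x ∈ P.V, P.A x + P.G (F x) ∈ P.V := by
  obtain ⟨F, hF⟩ := (P.V.comap (P.A.coprod P.G)).exists_linear_selection
  refine ⟨F, fun x hx => hF x ?_⟩
  obtain ⟨d, hd⟩ := P.exists_add_G_mem_V hx
  exact ⟨(x, d), hd, rfl⟩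

end consistent

section simulation

variable {W : Type} [AddCommGroup W] [Module ℝ W]
  {X₁ D₁ Y₁ : Type} [AddCommGroup X₁] [Module ℝ X₁] [AddCommGroup D₁] [Module ℝ D₁]
  [AddCommGroup Y₁] [Module ℝ Y₁]
  {X₂ D₂ Y₂ : Type} [AddCommGroup X₂] [Module ℝ X₂] [AddCommGroup D₂] [Module ℝ D₂]
  [AddCommGroup Y₂] [Module ℝ Y₂]
  {P₁ : DVSystem X₁ W D₁ Y₁} {P₂ : DVSystem X₂ W D₂ Y₂} {S : Submodule ℝ (X₁ × X₂)}

theorem SimConds.exists_feedback (hS : SimConds P₁ P₂ S) :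
    ∃ K : (X₁ × X₂) × D₁ →ₗ[ℝ] D₂, ∀ z ∈ S, ∀ d, P₁.A z.1 + P₁.G d ∈ P₁.V →
      (P₁.A z.1 + P₁.G d, P₂.A z.2 + P₂.G (K (z, d))) ∈ S := by
  let velocity : ((X₁ × X₂) × D₁) × D₂ →ₗ[ℝ] X₁ × X₂ :=
    (P₁.A.prodMap P₂.A).coprod (P₁.G.prodMap P₂.G) ∘ₗ (LinearEquiv.prodAssoc ℝ _ _ _).toLinearMap
  obtain ⟨K, hK⟩ := (S.comap velocity).exists_linear_selection
  refine ⟨K, fun z hz d hd => hK (z, d) ?_⟩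
  obtain ⟨d₂, -, hd₂⟩ := (hS z.1 z.2 hz).1 d hd
  exact ⟨((z, d), d₂), hd₂, rfl⟩

end simulation

section trajectory

variable {X W D Y : Type} [NormedAddCommGroup X] [NormedSpace ℝ X] [AddCommGroup W] [Module ℝ W]
  [NormedAddCommGroup D] [NormedSpace ℝ D] [AddCommGroup Y] [Module ℝ Y] (P : DVSystem X W D Y)

def IsTrajectory (x : ℝ → X) (d : ℝ → D) : Prop :=
  ContinuousOn d (Ici 0) ∧ ∀ t ∈ Ici (0 : ℝ), HasDerivWithinAt x (P.A (x t) + P.G (d t)) (Ici 0) t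

theorem exists_isTrajectory_mem_V [FiniteDimensional ℝ X] {x₀ : X} (hx₀ : x₀ ∈ P.V) {d₀ : D}
    (hd₀ : P.A x₀ + P.G d₀ ∈ P.V) :
    ∃ x d, P.IsTrajectory x d ∧ x 0 = x₀ ∧ d 0 = d₀ ∧ ∀ t, x t ∈ P.V := by
  obtain ⟨F, hF⟩ := P.exists_friend
  have hG : P.G (d₀ - F x₀) ∈ P.V := by
    simpa [map_sub] using P.V.sub_mem hd₀ (hF x₀ hx₀)
  obtain ⟨x, hx₀', hx, hxV⟩ := P.V.exists_linear_ode_solution_mem (M := P.A + P.G ∘ₗ F) hF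
    continuousOn_const (fun _ _ => hG) hx₀
  refine ⟨x, fun t => F (x t) + (d₀ - F x₀), ⟨?_, fun t ht => ?_⟩, hx₀', by simp [hx₀'], hxV⟩
  · exact (F.continuous_of_finiteDimensional.comp_continuousOn
      (HasDerivWithinAt.continuousOn hx)).add continuousOn_const
  · simpa [add_assoc] using hx t ht

end trajectory

section simulationTrajectory

variable {W : Type} [AddCommGroup W] [Module ℝ W]
  {X₁ D₁ Y₁ : Type} [NormedAddCommGroup X₁] [NormedSpace ℝ X₁] [NormedAddCommGroup D₁]
  [NormedSpace ℝ D₁] [AddCommGroup Y₁] [Module ℝ Y₁]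
  {X₂ D₂ Y₂ : Type} [NormedAddCommGroup X₂] [NormedSpace ℝ X₂] [NormedAddCommGroup D₂]
  [NormedSpace ℝ D₂] [AddCommGroup Y₂] [Module ℝ Y₂]
  {P₁ : DVSystem X₁ W D₁ Y₁} {P₂ : DVSystem X₂ W D₂ Y₂} {S : Submodule ℝ (X₁ × X₂)}

theorem SimConds.exists_isTrajectory [FiniteDimensional ℝ X₁] [FiniteDimensional ℝ X₂]
    [FiniteDimensional ℝ D₁] (hS : SimConds P₁ P₂ S) (hp₁ : S.map (LinearMap.fst ℝ X₁ X₂) ≤ P₁.V)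
    {x₁ : ℝ → X₁} {d₁ : ℝ → D₁} (h₁ : P₁.IsTrajectory x₁ d₁)
    (hV : ∀ t ∈ Ici (0 : ℝ), x₁ t ∈ P₁.V) {x₂₀ : X₂} (h₀ : (x₁ 0, x₂₀) ∈ S) :
    ∃ x₂ d₂, P₂.IsTrajectory x₂ d₂ ∧ x₂ 0 = x₂₀ ∧ ∀ t ∈ Ici (0 : ℝ), (x₁ t, x₂ t) ∈ S := by
  obtain ⟨F, hF⟩ := P₁.exists_friend
  obtain ⟨K, hK⟩ := hS.exists_feedback
  let Φ : (X₁ × X₂) × D₁ →ₗ[ℝ] X₁ × X₂ :=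
    (P₁.A ∘ₗ LinearMap.fst ℝ _ _ ∘ₗ LinearMap.fst ℝ _ _ + P₁.G ∘ₗ LinearMap.snd ℝ _ _).prod
      (P₂.A ∘ₗ LinearMap.snd ℝ _ _ ∘ₗ LinearMap.fst ℝ _ _ + P₂.G ∘ₗ K)
  have hΦ (z : X₁ × X₂) (d : D₁) :
      Φ (z, d) = (P₁.A z.1 + P₁.G d, P₂.A z.2 + P₂.G (K (z, d))) := rfl
  have hx₁ : ContinuousOn x₁ (Ici 0) := HasDerivWithinAt.continuousOn h₁.2
  let e : ℝ → D₁ := fun t => d₁ t - F (x₁ t)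
  have he : ContinuousOn e (Ici 0) :=
    h₁.1.sub (F.continuous_of_finiteDimensional.comp_continuousOn hx₁)
  have hGe (t : ℝ) (ht : t ∈ Ici 0) : P₁.G (e t) ∈ P₁.V := by
    have hvel := P₁.V.mem_of_hasDerivWithinAt_Ici P₁.V.closed_of_finiteDimensional
      (fun s hs => hV s (Ici_subset_Ici.2 ht hs)) ((h₁.2 t ht).mono (Ici_subset_Ici.2 ht))
    simpa [e, map_sub] using P₁.V.sub_mem hvel (hF _ (hV t ht))
  obtain ⟨ξ, hξ₀, hξ, hξS⟩ := S.exists_linear_ode_solution_mem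
    (M := Φ ∘ₗ LinearMap.id.prod (F ∘ₗ LinearMap.fst ℝ _ _)) (g := fun t => Φ (0, e t))
    (fun z hz => hK z hz _ (hF z.1 (hp₁ ⟨z, hz, rfl⟩)))
    (Φ.continuous_of_finiteDimensional.comp_continuousOn (continuousOn_const.prodMk he))
    (fun t ht => hK 0 S.zero_mem _ (by simpa using hGe t ht)) h₀
  have hξ' (t : ℝ) (ht : t ∈ Ici 0) :
      HasDerivWithinAt ξ (Φ (ξ t, F (ξ t).1 + e t)) (Ici 0) t := by
    refine (hξ t ht).congr_deriv ?_
    rw [LinearMap.comp_apply, ← map_add]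
    simp
  have hξ₁ : EqOn (fun t => (ξ t).1) x₁ (Ici 0) := by
    refine eqOn_Ici_of_linear_ode (P₁.A + P₁.G ∘ₗ F).toContinuousLinearMap
      (g := fun t => P₁.G (e t)) (fun t ht => ?_) (fun t ht => ?_) (by simp [hξ₀])
    · have := (ContinuousLinearMap.fst ℝ X₁ X₂).hasFDerivAt.comp_hasDerivWithinAt t (hξ' t ht)
      simpa [Function.comp_def, hΦ, add_assoc] using this
    · simpa [e, add_assoc] using h₁.2 t ht
  refine ⟨fun t => (ξ t).2, fun t => K (ξ t, d₁ t), ⟨?_, fun t ht => ?_⟩, by simp [hξ₀],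
    fun t ht => ?_⟩
  · exact K.continuous_of_finiteDimensional.comp_continuousOn
      ((HasDerivWithinAt.continuousOn hξ).prodMk h₁.1)
  · have := (ContinuousLinearMap.snd ℝ X₁ X₂).hasFDerivAt.comp_hasDerivWithinAt t (hξ' t ht)
    simpa [Function.comp_def, hΦ, e, hξ₁ ht] using this
  · rw [← hξ₁ ht]
    exact hξS t

end simulationTrajectory

end DVSystem

theorem trajectory_simulation_iff_algebraic_general
    {W Y₁ Y₂ : Type} [AddCommGroup W] [Module ℝ W]
    [AddCommGroup Y₁] [Module ℝ Y₁]
    [AddCommGroup Y₂] [Module ℝ Y₂]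
    {X₁ D₁ X₂ D₂ : Type}
    [NormedAddCommGroup X₁] [NormedSpace ℝ X₁] [FiniteDimensional ℝ X₁]
    [NormedAddCommGroup D₁] [NormedSpace ℝ D₁] [FiniteDimensional ℝ D₁]
    [NormedAddCommGroup X₂] [NormedSpace ℝ X₂] [FiniteDimensional ℝ X₂]
    [NormedAddCommGroup D₂] [NormedSpace ℝ D₂]
    (P₁ : DVSystem X₁ W D₁ Y₁) (P₂ : DVSystem X₂ W D₂ Y₂)
    (S : Submodule ℝ (X₁ × X₂))
    (hp₁ : S.map (LinearMap.fst ℝ X₁ X₂) ≤ P₁.V)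
    (hp₂ : S.map (LinearMap.snd ℝ X₁ X₂) ≤ P₂.V) :
    (∀ x₁0 x₂0, (x₁0, x₂0) ∈ S →
      (∀ (x₁ : ℝ → X₁) (d₁ : ℝ → D₁),
          ContinuousOn d₁ (Set.Ici 0) → x₁ 0 = x₁0 →
          (∀ t ∈ Set.Ici (0 : ℝ),
            HasDerivWithinAt x₁ (P₁.A (x₁ t) + P₁.G (d₁ t)) (Set.Ici 0) t) →
          (∀ t ∈ Set.Ici (0 : ℝ), x₁ t ∈ P₁.V) →
          ∃ (x₂ : ℝ → X₂) (d₂ : ℝ → D₂),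
            ContinuousOn d₂ (Set.Ici 0) ∧ x₂ 0 = x₂0 ∧
            (∀ t ∈ Set.Ici (0 : ℝ),
              HasDerivWithinAt x₂ (P₂.A (x₂ t) + P₂.G (d₂ t)) (Set.Ici 0) t) ∧
            (∀ t ∈ Set.Ici (0 : ℝ), (x₁ t, x₂ t) ∈ S)) ∧
      P₁.C x₁0 = P₂.C x₂0) ↔
    SimConds P₁ P₂ S := by
  constructor
  · intro h x₁ x₂ hx
    refine ⟨fun d₁ hd₁ => ?_, (h x₁ x₂ hx).2⟩
    obtain ⟨y₁, e₁, hy₁, hy₁₀, he₁₀, hy₁V⟩ := P₁.exists_isTrajectory_mem_V (hp₁ ⟨_, hx, rfl⟩) hd₁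
    obtain ⟨y₂, e₂, -, hy₂₀, hy₂, hyS⟩ :=
      (h x₁ x₂ hx).1 y₁ e₁ hy₁.1 hy₁₀ hy₁.2 fun t _ => hy₁V t
    have hvel := S.mem_of_hasDerivWithinAt_Ici S.closed_of_finiteDimensional hyS
      ((hy₁.2 0 self_mem_Ici).prodMk (hy₂ 0 self_mem_Ici))
    rw [hy₁₀, hy₂₀, he₁₀] at hvel
    exact ⟨e₂ 0, hp₂ ⟨_, hvel, rfl⟩, hvel⟩
  · intro hS x₁ x₂ hx
    refine ⟨fun y₁ e₁ he₁ hy₁₀ hy₁ hy₁V => ?_, (hS x₁ x₂ hx).2⟩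
    obtain ⟨y₂, e₂, hy₂, hy₂₀, hyS⟩ := hS.exists_isTrajectory hp₁ ⟨he₁, hy₁⟩ hy₁V (hy₁₀ ▸ hx)
    exact ⟨y₂, e₂, hy₂.1, hy₂₀, hy₂.2, hyS⟩

/-- Lemma 2: a subspace with projections inside the consistent subspaces is a
trajectory simulation relation if and only if the algebraic conditions (i)-(ii) hold. -/
theorem trajectory_simulation_iff_algebraic
    {W Y₁ Y₂ : Type} [AddCommGroup W] [Module ℝ W] [FiniteDimensional ℝ W]
    [AddCommGroup Y₁] [Module ℝ Y₁] [FiniteDimensional ℝ Y₁]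
    [AddCommGroup Y₂] [Module ℝ Y₂] [FiniteDimensional ℝ Y₂]
    {X₁ D₁ X₂ D₂ : Type}
    [NormedAddCommGroup X₁] [NormedSpace ℝ X₁] [FiniteDimensional ℝ X₁]
    [NormedAddCommGroup D₁] [NormedSpace ℝ D₁] [FiniteDimensional ℝ D₁]
    [NormedAddCommGroup X₂] [NormedSpace ℝ X₂] [FiniteDimensional ℝ X₂]
    [NormedAddCommGroup D₂] [NormedSpace ℝ D₂] [FiniteDimensional ℝ D₂]
    (P₁ : DVSystem X₁ W D₁ Y₁) (P₂ : DVSystem X₂ W D₂ Y₂)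
    (S : Submodule ℝ (X₁ × X₂))
    (hp₁ : S.map (LinearMap.fst ℝ X₁ X₂) ≤ P₁.V)
    (hp₂ : S.map (LinearMap.snd ℝ X₁ X₂) ≤ P₂.V) :
    (∀ x₁0 x₂0, (x₁0, x₂0) ∈ S →
      (∀ (x₁ : ℝ → X₁) (d₁ : ℝ → D₁),
          ContinuousOn d₁ (Set.Ici 0) → x₁ 0 = x₁0 →
          (∀ t ∈ Set.Ici (0 : ℝ),
            HasDerivWithinAt x₁ (P₁.A (x₁ t) + P₁.G (d₁ t)) (Set.Ici 0) t) →
          (∀ t ∈ Set.Ici (0 : ℝ), x₁ t ∈ P₁.V) →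
          ∃ (x₂ : ℝ → X₂) (d₂ : ℝ → D₂),
            ContinuousOn d₂ (Set.Ici 0) ∧ x₂ 0 = x₂0 ∧
            (∀ t ∈ Set.Ici (0 : ℝ),
              HasDerivWithinAt x₂ (P₂.A (x₂ t) + P₂.G (d₂ t)) (Set.Ici 0) t) ∧
            (∀ t ∈ Set.Ici (0 : ℝ), (x₁ t, x₂ t) ∈ S)) ∧
      P₁.C x₁0 = P₂.C x₂0) ↔
    SimConds P₁ P₂ S :=
  trajectory_simulation_iff_algebraic_general P₁ P₂ S hp₁ hp₂
end

section
/- A system Σ in driving variable form is an implementation of the contract (A, G) if and only if it is an implementation of the contract (A, A ∘ G), where A ∘ G denotes the composition of the assumptions with the guarantees. -/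
/-!
Both directions come from three closure properties of simulation: it is transitive, a composition
`P₁ ∘ P₂` is simulated by each of `P₁` and `P₂`, and two simulations `P ≼ Q₁`, `P ≼ Q₂` pair to a
simulation `P ≼ Q₁ ∘ Q₂`. If `E ≼ A`, then `E ∘ Σ ≼ A ∘ G ≼ G` gives one direction, while
`E ∘ Σ ≼ E ≼ A` together with `E ∘ Σ ≼ G` gives `E ∘ Σ ≼ A ∘ G` for the other.
-/

theorem Submodule.mem_map_fst_iff {R M N : Type*} [Semiring R] [AddCommMonoid M] [Module R M]
    [AddCommMonoid N] [Module R N] {S : Submodule R (M × N)} {x : M} :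
    x ∈ S.map (LinearMap.fst R M N) ↔ ∃ y, (x, y) ∈ S :=
  ⟨fun ⟨z, hz, h⟩ => ⟨z.2, h ▸ hz⟩, fun ⟨y, h⟩ => ⟨(x, y), h, rfl⟩⟩

namespace DVSystem

open Submodule (mem_map_fst_iff)

section consistent

variable {X W D Y : Type} [AddCommGroup X] [Module ℝ X] [AddCommGroup W] [Module ℝ W]
  [AddCommGroup D] [Module ℝ D] [AddCommGroup Y] [Module ℝ Y]

theorem admissible_V_s11 (P : DVSystem X W D Y) : P.Admissible P.V := by
  refine ⟨?_, sSup_le fun U hU => hU.2⟩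
  rw [Submodule.map_le_iff_le_comap]
  refine sSup_le fun U hU => ?_
  exact (Submodule.map_le_iff_le_comap.mp hU.1).trans
    (Submodule.comap_mono (sup_le_sup_right (le_sSup hU) _))

theorem le_V {P : DVSystem X W D Y} {U : Submodule ℝ X} (hU : P.Admissible U) : U ≤ P.V :=
  le_sSup hU

theorem H_eq_zero_of_mem_V {P : DVSystem X W D Y} {x : X} (hx : x ∈ P.V) : P.H x = 0 :=
  P.admissible_V_s11.2 hx

theorem exists_A_add_G_mem_V {P : DVSystem X W D Y} {x : X} (hx : x ∈ P.V) :
    ∃ d, P.A x + P.G d ∈ P.V := by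
  obtain ⟨v, hv, _, ⟨d, rfl⟩, h⟩ :=
    Submodule.mem_sup.mp (P.admissible_V_s11.1 (Submodule.mem_map_of_mem hx))
  refine ⟨-d, ?_⟩
  rwa [map_neg, ← h, add_neg_cancel_right]

end consistent

section simulation

variable {W : Type} [AddCommGroup W] [Module ℝ W]
  {X₁ D₁ Y₁ : Type} [AddCommGroup X₁] [Module ℝ X₁]
  [AddCommGroup D₁] [Module ℝ D₁] [AddCommGroup Y₁] [Module ℝ Y₁]
  {X₂ D₂ Y₂ : Type} [AddCommGroup X₂] [Module ℝ X₂]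
  [AddCommGroup D₂] [Module ℝ D₂] [AddCommGroup Y₂] [Module ℝ Y₂]
  {X₃ D₃ Y₃ : Type} [AddCommGroup X₃] [Module ℝ X₃]
  [AddCommGroup D₃] [Module ℝ D₃] [AddCommGroup Y₃] [Module ℝ Y₃]

/-- The matching steps of `P₂` need not be required to stay in `V₂*`: they do automatically,
because the second projection of `S` is admissible. -/
theorem simulates_of_step {P₁ : DVSystem X₁ W D₁ Y₁} {P₂ : DVSystem X₂ W D₂ Y₂}
    (S : Submodule ℝ (X₁ × X₂)) (hfst : S.map (LinearMap.fst ℝ X₁ X₂) = P₁.V)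
    (hH : ∀ x₁ x₂, (x₁, x₂) ∈ S → P₂.H x₂ = 0)
    (hC : ∀ x₁ x₂, (x₁, x₂) ∈ S → P₁.C x₁ = P₂.C x₂)
    (hstep : ∀ x₁ x₂, (x₁, x₂) ∈ S → ∀ d₁, P₁.A x₁ + P₁.G d₁ ∈ P₁.V →
      ∃ d₂, (P₁.A x₁ + P₁.G d₁, P₂.A x₂ + P₂.G d₂) ∈ S) :
    Simulates P₁ P₂ := by
  have hsnd : S.map (LinearMap.snd ℝ X₁ X₂) ≤ P₂.V := by
    refine le_V ⟨?_, ?_⟩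
    · rintro _ ⟨_, ⟨⟨x₁, x₂⟩, hx, rfl⟩, rfl⟩
      have hx₁ : x₁ ∈ P₁.V := hfst ▸ mem_map_fst_iff.mpr ⟨x₂, hx⟩
      obtain ⟨d₁, hd₁⟩ := exists_A_add_G_mem_V hx₁
      obtain ⟨d₂, hd₂⟩ := hstep x₁ x₂ hx d₁ hd₁
      refine Submodule.mem_sup.mpr ⟨_, ⟨_, hd₂, rfl⟩, P₂.G (-d₂), ⟨-d₂, rfl⟩, ?_⟩
      simp only [LinearMap.snd_apply, map_neg, add_neg_cancel_right]
    · rintro _ ⟨⟨x₁, x₂⟩, hx, rfl⟩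
      exact hH x₁ x₂ hx
  refine ⟨S, ⟨hfst.le, hsnd, fun x₁ x₂ hx => ⟨fun d₁ hd₁ => ?_, hC x₁ x₂ hx⟩⟩, hfst⟩
  obtain ⟨d₂, hd₂⟩ := hstep x₁ x₂ hx d₁ hd₁
  exact ⟨d₂, hsnd ⟨_, hd₂, rfl⟩, hd₂⟩

theorem Simulates.trans {P₁ : DVSystem X₁ W D₁ Y₁} {P₂ : DVSystem X₂ W D₂ Y₂}
    {P₃ : DVSystem X₃ W D₃ Y₃} (h₁₂ : Simulates P₁ P₂) (h₂₃ : Simulates P₂ P₃) :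
    Simulates P₁ P₃ := by
  obtain ⟨S, ⟨-, hS₂, hS⟩, hSfst⟩ := h₁₂
  obtain ⟨T, ⟨-, hT₂, hT⟩, hTfst⟩ := h₂₃
  refine simulates_of_step (relComp S T) (le_antisymm ?_ fun x₁ hx₁ => ?_) ?_ ?_ ?_
  · rintro _ ⟨⟨x₁, x₃⟩, ⟨x₂, hx₁₂, -⟩, rfl⟩
    exact hSfst ▸ mem_map_fst_iff.mpr ⟨x₂, hx₁₂⟩
  · obtain ⟨x₂, hx₁₂⟩ := mem_map_fst_iff.mp (hSfst ▸ hx₁)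
    obtain ⟨x₃, hx₂₃⟩ := mem_map_fst_iff.mp (hTfst ▸ hS₂ ⟨_, hx₁₂, rfl⟩)
    exact mem_map_fst_iff.mpr ⟨x₃, x₂, hx₁₂, hx₂₃⟩
  · rintro x₁ x₃ ⟨x₂, -, hx₂₃⟩
    exact H_eq_zero_of_mem_V (hT₂ ⟨_, hx₂₃, rfl⟩)
  · rintro x₁ x₃ ⟨x₂, hx₁₂, hx₂₃⟩
    exact (hS x₁ x₂ hx₁₂).2.trans (hT x₂ x₃ hx₂₃).2
  · rintro x₁ x₃ ⟨x₂, hx₁₂, hx₂₃⟩ d₁ hd₁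
    obtain ⟨d₂, hd₂, h₁₂⟩ := (hS x₁ x₂ hx₁₂).1 d₁ hd₁
    obtain ⟨d₃, -, h₂₃⟩ := (hT x₂ x₃ hx₂₃).1 d₂ hd₂
    exact ⟨d₃, _, h₁₂, h₂₃⟩

theorem simulates_of_linearMap {P₁ : DVSystem X₁ W D₁ Y₁} {P₂ : DVSystem X₂ W D₂ Y₂}
    (f : X₁ →ₗ[ℝ] X₂) (g : D₁ →ₗ[ℝ] D₂) (hA : ∀ x, f (P₁.A x) = P₂.A (f x))
    (hG : ∀ d, f (P₁.G d) = P₂.G (g d)) (hH : ∀ x ∈ P₁.V, P₂.H (f x) = 0)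
    (hC : ∀ x ∈ P₁.V, P₁.C x = P₂.C (f x)) :
    Simulates P₁ P₂ := by
  have hmem : ∀ x₁ x₂, (x₁, x₂) ∈ P₁.V.map (LinearMap.id.prod f) ↔ x₁ ∈ P₁.V ∧ f x₁ = x₂ := by
    intro x₁ x₂
    simp only [Submodule.mem_map, LinearMap.prod_apply, Function.prod, LinearMap.id_apply,
      Prod.mk.injEq]
    exact ⟨fun ⟨x, hx, h₁, h₂⟩ => h₁ ▸ ⟨hx, h₂⟩, fun ⟨hx, h⟩ => ⟨x₁, hx, rfl, h⟩⟩
  refine simulates_of_step (P₁.V.map (LinearMap.id.prod f))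
    (le_antisymm ?_ fun x hx => mem_map_fst_iff.mpr ⟨f x, ?_⟩) ?_ ?_ ?_
  · rintro _ ⟨⟨x₁, x₂⟩, hx, rfl⟩
    exact ((hmem x₁ x₂).mp hx).1
  · exact (hmem _ _).mpr ⟨hx, rfl⟩
  · rintro x₁ _ hx
    obtain ⟨hx₁, rfl⟩ := (hmem _ _).mp hx
    exact hH x₁ hx₁
  · rintro x₁ _ hx
    obtain ⟨hx₁, rfl⟩ := (hmem _ _).mp hx
    exact hC x₁ hx₁
  · rintro x₁ _ hx d₁ hd₁
    obtain ⟨-, rfl⟩ := (hmem _ _).mp hx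
    exact ⟨g d₁, (hmem _ _).mpr ⟨hd₁, by rw [map_add, hA, hG]⟩⟩

end simulation

section composition

variable {W : Type} [AddCommGroup W] [Module ℝ W]
  {X D Y : Type} [AddCommGroup X] [Module ℝ X]
  [AddCommGroup D] [Module ℝ D] [AddCommGroup Y] [Module ℝ Y]
  {X₁ D₁ Y₁ : Type} [AddCommGroup X₁] [Module ℝ X₁]
  [AddCommGroup D₁] [Module ℝ D₁] [AddCommGroup Y₁] [Module ℝ Y₁]
  {X₂ D₂ Y₂ : Type} [AddCommGroup X₂] [Module ℝ X₂]
  [AddCommGroup D₂] [Module ℝ D₂] [AddCommGroup Y₂] [Module ℝ Y₂]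

theorem comp_H_eq_zero_iff (P₁ : DVSystem X₁ W D₁ Y₁) (P₂ : DVSystem X₂ W D₂ Y₂)
    (z : X₁ × X₂) :
    (comp P₁ P₂).H z = 0 ↔ P₁.H z.1 = 0 ∧ P₂.H z.2 = 0 ∧ P₁.C z.1 = P₂.C z.2 := by
  simp [comp, sub_eq_zero]

theorem comp_C_eq_of_eq {P₁ : DVSystem X₁ W D₁ Y₁} {P₂ : DVSystem X₂ W D₂ Y₂}
    {z : X₁ × X₂} {w : W} (h₁ : P₁.C z.1 = w) (h₂ : P₂.C z.2 = w) : (comp P₁ P₂).C z = w := by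
  change (1 / 2 : ℝ) • (P₁.C z.1 + P₂.C z.2) = w
  rw [h₁, h₂, ← two_smul ℝ w, smul_smul]
  norm_num

theorem comp_simulates_left (P₁ : DVSystem X₁ W D₁ Y₁) (P₂ : DVSystem X₂ W D₂ Y₂) :
    Simulates (comp P₁ P₂) P₁ := by
  refine simulates_of_linearMap (LinearMap.fst ℝ X₁ X₂) (LinearMap.fst ℝ D₁ D₂)
    (fun _ => rfl) (fun _ => rfl) (fun z hz => ?_) (fun z hz => ?_)
  · exact ((comp_H_eq_zero_iff P₁ P₂ z).mp (H_eq_zero_of_mem_V hz)).1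
  · exact comp_C_eq_of_eq rfl ((comp_H_eq_zero_iff P₁ P₂ z).mp (H_eq_zero_of_mem_V hz)).2.2.symm

theorem comp_simulates_right (P₁ : DVSystem X₁ W D₁ Y₁) (P₂ : DVSystem X₂ W D₂ Y₂) :
    Simulates (comp P₁ P₂) P₂ := by
  refine simulates_of_linearMap (LinearMap.snd ℝ X₁ X₂) (LinearMap.snd ℝ D₁ D₂)
    (fun _ => rfl) (fun _ => rfl) (fun z hz => ?_) (fun z hz => ?_)
  · exact ((comp_H_eq_zero_iff P₁ P₂ z).mp (H_eq_zero_of_mem_V hz)).2.1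
  · exact comp_C_eq_of_eq ((comp_H_eq_zero_iff P₁ P₂ z).mp (H_eq_zero_of_mem_V hz)).2.2 rfl

theorem simulates_comp {P : DVSystem X W D Y} {P₁ : DVSystem X₁ W D₁ Y₁}
    {P₂ : DVSystem X₂ W D₂ Y₂} (h₁ : Simulates P P₁) (h₂ : Simulates P P₂) :
    Simulates P (comp P₁ P₂) := by
  obtain ⟨S₁, ⟨-, hS₁snd, hS₁⟩, hS₁fst⟩ := h₁
  obtain ⟨S₂, ⟨-, hS₂snd, hS₂⟩, hS₂fst⟩ := h₂
  refine simulates_of_step (pairRel S₁ S₂) (le_antisymm ?_ fun x hx => ?_) ?_ ?_ ?_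
  · rintro _ ⟨⟨x, y⟩, ⟨hxy₁, -⟩, rfl⟩
    exact hS₁fst ▸ mem_map_fst_iff.mpr ⟨y.1, hxy₁⟩
  · obtain ⟨y₁, hy₁⟩ := mem_map_fst_iff.mp (hS₁fst ▸ hx)
    obtain ⟨y₂, hy₂⟩ := mem_map_fst_iff.mp (hS₂fst ▸ hx)
    exact mem_map_fst_iff.mpr ⟨(y₁, y₂), hy₁, hy₂⟩
  · rintro x y ⟨hy₁, hy₂⟩
    exact (comp_H_eq_zero_iff P₁ P₂ y).mpr ⟨H_eq_zero_of_mem_V (hS₁snd ⟨_, hy₁, rfl⟩),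
      H_eq_zero_of_mem_V (hS₂snd ⟨_, hy₂, rfl⟩), (hS₁ _ _ hy₁).2.symm.trans (hS₂ _ _ hy₂).2⟩
  · rintro x y ⟨hy₁, hy₂⟩
    exact (comp_C_eq_of_eq (hS₁ _ _ hy₁).2.symm (hS₂ _ _ hy₂).2.symm).symm
  · rintro x y ⟨hy₁, hy₂⟩ d hd
    obtain ⟨d₁, -, hd₁⟩ := (hS₁ _ _ hy₁).1 d hd
    obtain ⟨d₂, -, hd₂⟩ := (hS₂ _ _ hy₂).1 d hd
    exact ⟨(d₁, d₂), hd₁, hd₂⟩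

end composition

end DVSystem

open DVSystem

theorem implements_iff_implements_comp_general {W : Type} [AddCommGroup W] [Module ℝ W]
    {X D Y : Type} [AddCommGroup X] [Module ℝ X]
    [AddCommGroup D] [Module ℝ D]
    [AddCommGroup Y] [Module ℝ Y]
    {Xa Da Ya : Type} [AddCommGroup Xa] [Module ℝ Xa]
    [AddCommGroup Da] [Module ℝ Da]
    [AddCommGroup Ya] [Module ℝ Ya]
    {Xg Dg Yg : Type} [AddCommGroup Xg] [Module ℝ Xg]
    [AddCommGroup Dg] [Module ℝ Dg]
    [AddCommGroup Yg] [Module ℝ Yg]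
    (Sys : DVSystem X W D Y) (Ass : DVSystem Xa W Da Ya) (Gar : DVSystem Xg W Dg Yg) :
    Implements Sys Ass Gar ↔ Implements Sys Ass (comp Ass Gar) := by
  constructor
  · intro h Xe De Ye _ _ _ _ _ _ _ _ _ E hE
    exact simulates_comp ((comp_simulates_left E Sys).trans hE) (h Xe De Ye E hE)
  · intro h Xe De Ye _ _ _ _ _ _ _ _ _ E hE
    exact (h Xe De Ye E hE).trans (comp_simulates_right Ass Gar)

/-- `Σ` implements `(Ass, Gar)` iff it implements `(Ass, Ass ∘ Gar)`. -/
theorem implements_iff_implements_comp {W : Type} [AddCommGroup W] [Module ℝ W] [FiniteDimensional ℝ W]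
    {X D Y : Type} [AddCommGroup X] [Module ℝ X] [FiniteDimensional ℝ X]
    [AddCommGroup D] [Module ℝ D] [FiniteDimensional ℝ D]
    [AddCommGroup Y] [Module ℝ Y] [FiniteDimensional ℝ Y]
    {Xa Da Ya : Type} [AddCommGroup Xa] [Module ℝ Xa] [FiniteDimensional ℝ Xa]
    [AddCommGroup Da] [Module ℝ Da] [FiniteDimensional ℝ Da]
    [AddCommGroup Ya] [Module ℝ Ya] [FiniteDimensional ℝ Ya]
    {Xg Dg Yg : Type} [AddCommGroup Xg] [Module ℝ Xg] [FiniteDimensional ℝ Xg]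
    [AddCommGroup Dg] [Module ℝ Dg] [FiniteDimensional ℝ Dg]
    [AddCommGroup Yg] [Module ℝ Yg] [FiniteDimensional ℝ Yg]
    (Sys : DVSystem X W D Y) (Ass : DVSystem Xa W Da Ya) (Gar : DVSystem Xg W Dg Yg) :
    Implements Sys Ass Gar ↔ Implements Sys Ass (comp Ass Gar) :=
  implements_iff_implements_comp_general Sys Ass Gar
end

section
/- Existence of the consistent subspace: let X, D, Y be finite-dimensional real vector spaces and A : X → X, G : D → X, H : X → Y linear maps. Then the collection of linear subspaces V ⊆ X satisfying A V ⊆ V + im G and V ⊆ ker H has a largest element with respect to subspace inclusion; equivalently, the supremum of all subspaces satisfying these two conditions itself satisfies them. -/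
/-- A subspace `U` is consistent-admissible for the data `(A, G, H)` if
`A U ⊆ U + im G` and `U ⊆ ker H`. -/
def ConsistentAdmissible {X D Y : Type}
    [AddCommGroup X] [Module ℝ X] [AddCommGroup D] [Module ℝ D]
    [AddCommGroup Y] [Module ℝ Y]
    (A : X →ₗ[ℝ] X) (G : D →ₗ[ℝ] X) (H : X →ₗ[ℝ] Y) (U : Submodule ℝ X) : Prop :=
  U.map A ≤ U ⊔ LinearMap.range G ∧ U ≤ LinearMap.ker H

theorem ConsistentAdmissible.sSup {X D Y : Type}
    [AddCommGroup X] [Module ℝ X] [AddCommGroup D] [Module ℝ D]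
    [AddCommGroup Y] [Module ℝ Y]
    {A : X →ₗ[ℝ] X} {G : D →ₗ[ℝ] X} {H : X →ₗ[ℝ] Y} {S : Set (Submodule ℝ X)}
    (hS : ∀ U ∈ S, ConsistentAdmissible A G H U) :
    ConsistentAdmissible A G H (sSup S) := by
  constructor
  · rw [Submodule.map_le_iff_le_comap]
    refine sSup_le fun U hU => Submodule.map_le_iff_le_comap.mp ?_
    exact (hS U hU).1.trans (sup_le_sup_right (le_sSup hU) _)
  · exact sSup_le fun U hU => (hS U hU).2

theorem exists_largest_consistent_subspace_general {X D Y : Type}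
    [AddCommGroup X] [Module ℝ X]
    [AddCommGroup D] [Module ℝ D]
    [AddCommGroup Y] [Module ℝ Y]
    (A : X →ₗ[ℝ] X) (G : D →ₗ[ℝ] X) (H : X →ₗ[ℝ] Y) :
    (∃ Vs : Submodule ℝ X, ConsistentAdmissible A G H Vs ∧
      ∀ U : Submodule ℝ X, ConsistentAdmissible A G H U → U ≤ Vs) ∧
    ConsistentAdmissible A G H (sSup {U | ConsistentAdmissible A G H U}) := by
  have hsSup : ConsistentAdmissible A G H (sSup {U | ConsistentAdmissible A G H U}) :=
    ConsistentAdmissible.sSup fun _ hU => hU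
  exact ⟨⟨_, hsSup, fun _ hU => le_sSup hU⟩, hsSup⟩

/-- Existence of the consistent subspace: the collection of consistent-admissible
subspaces has a largest element; equivalently, the supremum of all
consistent-admissible subspaces is itself consistent-admissible. -/
theorem exists_largest_consistent_subspace {X D Y : Type}
    [AddCommGroup X] [Module ℝ X] [FiniteDimensional ℝ X]
    [AddCommGroup D] [Module ℝ D] [FiniteDimensional ℝ D]
    [AddCommGroup Y] [Module ℝ Y] [FiniteDimensional ℝ Y]
    (A : X →ₗ[ℝ] X) (G : D →ₗ[ℝ] X) (H : X →ₗ[ℝ] Y) :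
    (∃ Vs : Submodule ℝ X, ConsistentAdmissible A G H Vs ∧
      ∀ U : Submodule ℝ X, ConsistentAdmissible A G H U → U ≤ Vs) ∧
    ConsistentAdmissible A G H (sSup {U | ConsistentAdmissible A G H U}) :=
  exists_largest_consistent_subspace_general A G H
end

section
/- Spacing-policy invariance and attractivity for the controlled vehicle-following system: let h, k > 0 and let s₁, v₁, s₂, v₂ : [0,∞) → ℝ be differentiable functions satisfying ṡ₁(t) = v₁(t), ṡ₂(t) = v₂(t), and v̇₂(t) = h⁻¹(v₁(t) − v₂(t)) + k h⁻¹(s₁(t) − s₂(t) − h v₂(t)) for all t ≥ 0. Define the spacing error e(t) = −s₁(t) + s₂(t) + h v₂(t). Then e(t) = e(0) e^{−k t} for all t ≥ 0; in particular, if e(0) = 0 then e(t) = 0 for all t ≥ 0, and e(t) → 0 as t → ∞. -/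
/-!
The controller is designed so that the spacing error `e = -s₁ + s₂ + h v₂` obeys the scalar
linear equation `ė = -k e`: differentiating, `ė = -v₁ + v₂ + h v̇₂`, and the feedback law makes
`h v̇₂ = (v₁ - v₂) - k e`. Since `e(t) e^{k t}` then has zero derivative, `e(t) = e(0) e^{-k t}`.
-/

open Set Filter Topology Real

theorem eq_of_hasDerivWithinAt_zero_Ici {f : ℝ → ℝ} {a : ℝ}
    (hf : ∀ t ∈ Ici a, HasDerivWithinAt f 0 (Ici a) t) :
    ∀ t ∈ Ici a, f t = f a := by
  intro t ht
  have hcont : ContinuousOn f (Icc a t) := fun x hx =>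
    (hf x hx.1).continuousWithinAt.mono Icc_subset_Ici_self
  have hderiv : ∀ x ∈ Ico a t, HasDerivWithinAt f 0 (Ici x) x := fun x hx =>
    (hf x hx.1).mono (Ici_subset_Ici.2 hx.1)
  exact constant_of_has_deriv_right_zero hcont hderiv t (right_mem_Icc.2 ht)

theorem eq_mul_exp_of_hasDerivWithinAt_Ici {f : ℝ → ℝ} {a c : ℝ}
    (hf : ∀ t ∈ Ici a, HasDerivWithinAt f (c * f t) (Ici a) t) :
    ∀ t ∈ Ici a, f t = f a * exp (c * (t - a)) := by
  set g : ℝ → ℝ := fun t => f t * exp (-c * (t - a)) with hg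
  have hg' : ∀ t ∈ Ici a, HasDerivWithinAt g 0 (Ici a) t := by
    intro t ht
    have hexp : HasDerivWithinAt (fun t => exp (-c * (t - a))) (exp (-c * (t - a)) * -c)
        (Ici a) t := by
      simpa using (((hasDerivAt_id t).sub_const a).const_mul (-c)).exp.hasDerivWithinAt
    refine ((hf t ht).mul hexp).congr_deriv ?_
    ring
  intro t ht
  have hconst : g t = f a := by
    simpa [hg] using eq_of_hasDerivWithinAt_zero_Ici hg' t ht
  rw [← hconst, hg, mul_assoc, ← exp_add, neg_mul, neg_add_cancel, exp_zero, mul_one]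

theorem spacing_error_hasDerivWithinAt {h k : ℝ} (hh : h ≠ 0) {s₁ v₁ s₂ v₂ : ℝ → ℝ}
    {S : Set ℝ} {t : ℝ}
    (hs₁ : HasDerivWithinAt s₁ (v₁ t) S t) (hs₂ : HasDerivWithinAt s₂ (v₂ t) S t)
    (hv₂ : HasDerivWithinAt v₂
      (h⁻¹ * (v₁ t - v₂ t) + k * h⁻¹ * (s₁ t - s₂ t - h * v₂ t)) S t) :
    HasDerivWithinAt (fun t => -s₁ t + s₂ t + h * v₂ t)
      (-k * (-s₁ t + s₂ t + h * v₂ t)) S t := by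
  refine ((hs₁.neg.add hs₂).add (hv₂.const_mul h)).congr_deriv ?_
  field_simp
  ring

theorem tendsto_mul_exp_neg_mul_atTop_nhds_zero (C : ℝ) {k : ℝ} (hk : 0 < k) :
    Tendsto (fun t => C * exp (-k * t)) atTop (𝓝 0) := by
  have hexp : Tendsto (fun t => exp (-k * t)) atTop (𝓝 0) := by
    simpa using tendsto_rpow_mul_exp_neg_mul_atTop_nhds_zero 0 k hk
  simpa using hexp.const_mul C

/-- Spacing-policy invariance and attractivity for the controlled vehicle-following
system: the spacing error `e = −s₁ + s₂ + h v₂` satisfies `e(t) = e(0) e^{−k t}`;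
in particular it vanishes identically if `e(0) = 0`, and it tends to `0`. -/
theorem spacing_error_exp_decay (h k : ℝ) (hh : 0 < h) (hk : 0 < k)
    (s₁ v₁ s₂ v₂ : ℝ → ℝ)
    (hs₁ : ∀ t ∈ Set.Ici (0 : ℝ), HasDerivWithinAt s₁ (v₁ t) (Set.Ici 0) t)
    (hs₂ : ∀ t ∈ Set.Ici (0 : ℝ), HasDerivWithinAt s₂ (v₂ t) (Set.Ici 0) t)
    (hv₂ : ∀ t ∈ Set.Ici (0 : ℝ), HasDerivWithinAt v₂
      (h⁻¹ * (v₁ t - v₂ t) + k * h⁻¹ * (s₁ t - s₂ t - h * v₂ t)) (Set.Ici 0) t) :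
    (∀ t ∈ Set.Ici (0 : ℝ),
      -s₁ t + s₂ t + h * v₂ t = (-s₁ 0 + s₂ 0 + h * v₂ 0) * Real.exp (-k * t)) ∧
    ((-s₁ 0 + s₂ 0 + h * v₂ 0 = 0) →
      ∀ t ∈ Set.Ici (0 : ℝ), -s₁ t + s₂ t + h * v₂ t = 0) ∧
    Filter.Tendsto (fun t => -s₁ t + s₂ t + h * v₂ t) Filter.atTop (nhds 0) := by
  have hsol : ∀ t ∈ Ici (0 : ℝ),
      -s₁ t + s₂ t + h * v₂ t = (-s₁ 0 + s₂ 0 + h * v₂ 0) * exp (-k * t) := by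
    intro t ht
    simpa using eq_mul_exp_of_hasDerivWithinAt_Ici
      (fun t ht => spacing_error_hasDerivWithinAt hh.ne' (hs₁ t ht) (hs₂ t ht) (hv₂ t ht)) t ht
  refine ⟨hsol, fun h0 t ht => by rw [hsol t ht, h0, zero_mul], ?_⟩
  refine (tendsto_mul_exp_neg_mul_atTop_nhds_zero (-s₁ 0 + s₂ 0 + h * v₂ 0) hk).congr' ?_
  filter_upwards [eventually_ge_atTop 0] with t ht
  exact (hsol t ht).symm
end
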